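/- For n ≥ 3, the set partitions of [n] avoiding both 1/23 and 12/3 with exactly k blocks exist only for k ∈ {1, n-1, n}, with RGFs 1^n, 123⋯(n-1)1, and 123⋯n respectively; in particular there is exactly one such partition for each of these values of k. -/

import Mathlib

open Finset Polynomial

/-- Set partitions of `[n] = {1, …, n}`, modeled as finpartitions of `Fin n`. -/
abbrev SP (n : ℕ) := Finpartition (Finset.univ : Finset (Fin n))

noncomputable instance (n : ℕ) : Fintype (SP n) :=
  Fintype.ofInjective Finpartition.parts fun _ _ h => Finpartition.ext h

/-- `i` and `j` lie in the same block of the set partition `P`. -/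
def inSameBlock {n : ℕ} (P : SP n) (i j : Fin n) : Prop :=
  ∃ B ∈ P.parts, i ∈ B ∧ j ∈ B

/-- `P` avoids the pattern `1/2/3`: no three elements lie in three pairwise distinct blocks. -/
def avoids1_2_3 {n : ℕ} (P : SP n) : Prop :=
  ¬ ∃ a b c : Fin n, a < b ∧ b < c ∧
    ¬ inSameBlock P a b ∧ ¬ inSameBlock P b c ∧ ¬ inSameBlock P a c

/-- `P` avoids the pattern `13/2`. -/
def avoids13_2 {n : ℕ} (P : SP n) : Prop :=
  ¬ ∃ a b c : Fin n, a < b ∧ b < c ∧ inSameBlock P a c ∧ ¬ inSameBlock P a b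

/-- `P` avoids the pattern `1/23`. -/
def avoids1_23 {n : ℕ} (P : SP n) : Prop :=
  ¬ ∃ a b c : Fin n, a < b ∧ b < c ∧ inSameBlock P b c ∧ ¬ inSameBlock P a b

/-- `P` avoids the pattern `12/3`. -/
def avoids12_3 {n : ℕ} (P : SP n) : Prop :=
  ¬ ∃ a b c : Fin n, a < b ∧ b < c ∧ inSameBlock P a b ∧ ¬ inSameBlock P a c

/-- `P` avoids the pattern `123`: every block has at most two elements. -/
def avoids123 {n : ℕ} (P : SP n) : Prop :=
  ∀ B ∈ P.parts, B.card ≤ 2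

/-- The block of `P` containing `i`. -/
def blockOf {n : ℕ} (P : SP n) (i : Fin n) : Finset (Fin n) :=
  (P.parts.filter (fun B => i ∈ B)).sup id

/-- The restricted growth function of `P`: the letter at position `i` is the index
(starting from 1) of the block containing `i`, blocks being ordered by increasing minima. -/
def rgf {n : ℕ} (P : SP n) (i : Fin n) : ℕ :=
  (P.parts.filter (fun B => B.min ≤ (blockOf P i).min)).card

/-- The left-bigger statistic of Wachs and White. -/
def lbStat {n : ℕ} (w : Fin n → ℕ) : ℕ :=
  ∑ j : Fin n, (((Finset.univ.filter (fun i => i < j)).image w).filter (fun v => w j < v)).card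

/-- The left-smaller statistic of Wachs and White. -/
def lsStat {n : ℕ} (w : Fin n → ℕ) : ℕ :=
  ∑ j : Fin n, (((Finset.univ.filter (fun i => i < j)).image w).filter (fun v => v < w j)).card

/-- The right-bigger statistic of Wachs and White. -/
def rbStat {n : ℕ} (w : Fin n → ℕ) : ℕ :=
  ∑ j : Fin n, (((Finset.univ.filter (fun i => j < i)).image w).filter (fun v => w j < v)).card

/-- The right-smaller statistic of Wachs and White. -/
def rsStat {n : ℕ} (w : Fin n → ℕ) : ℕ :=
  ∑ j : Fin n, (((Finset.univ.filter (fun i => j < i)).image w).filter (fun v => v < w j)).card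

open Classical in
/-- The generating function `∑ q^{stat(π)}` over `k`-block partitions of `[n]` avoiding
a given family of patterns (described by the avoidance predicate `avoid`). -/
noncomputable def genPoly (n k : ℕ) (avoid : SP n → Prop) (stat : (Fin n → ℕ) → ℕ) :
    Polynomial ℕ :=
  ∑ P ∈ Finset.univ.filter (fun P : SP n => P.parts.card = k ∧ avoid P),
    Polynomial.X ^ (stat (rgf P))

/-!
Write `i ~ j` when `i, j : Fin n` share a block. Avoiding `12/3` means that `a ~ b` with `a < b`
forces `a ~ c` for every `c > b`; avoiding `1/23` means that it forces `x ~ a` for every `x < a`.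
So that block contains `[0, a] ∪ [b, n - 1]`, and unless `a = 0` and `b = n - 1`, a second
related pair inside it covers the gap, leaving a single block. Hence the only block with two or
more elements, if any, is all of `Fin n` or `{0, n - 1}`: the partition is the one into residue
classes modulo `d = 1`, `n - 1` or `n`, which has `d` blocks and RGF `i ↦ i % d + 1`.
-/

open Finpartition

section Blocks

variable {n : ℕ}

theorem mem_part_iff_part_eq (P : SP n) {i j : Fin n} : j ∈ P.part i ↔ P.part j = P.part i :=
  P.mem_part_iff_part_eq_part (mem_univ j) (mem_univ i)

theorem inSameBlock_iff_part_eq (P : SP n) {i j : Fin n} :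
    inSameBlock P i j ↔ P.part i = P.part j := by
  rw [← mem_part_iff_part_eq, mem_part_iff_exists]
  rfl

theorem blockOf_eq_part (P : SP n) (i : Fin n) : blockOf P i = P.part i := by
  have h : P.parts.filter (fun B => i ∈ B) = {P.part i} := by
    ext B
    simp only [mem_filter, mem_singleton]
    exact ⟨fun ⟨hB, hi⟩ => (P.part_eq_of_mem hB hi).symm,
      by rintro rfl; exact ⟨P.part_mem.2 (mem_univ i), P.mem_part (mem_univ i)⟩⟩
  rw [blockOf, h, sup_singleton, id]

theorem eq_of_part_eq_iff {P Q : SP n} (h : ∀ i j, P.part i = P.part j ↔ Q.part i = Q.part j) :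
    P = Q := by
  have hpart : ∀ i, P.part i = Q.part i := fun i => by
    ext j
    rw [mem_part_iff_part_eq, mem_part_iff_part_eq, h]
  have hsub : ∀ {P Q : SP n}, (∀ i, P.part i = Q.part i) → P.parts ⊆ Q.parts := by
    intro P Q hPQ B hB
    obtain ⟨i, -, rfl⟩ := P.part_surjOn hB
    exact hPQ i ▸ Q.part_mem.2 (mem_univ i)
  exact Finpartition.ext ((hsub hpart).antisymm (hsub fun i => (hpart i).symm))

theorem min_part_eq {P : SP n} {i m : Fin n} (hm : P.part m = P.part i)
    (hle : ∀ j, P.part j = P.part i → m ≤ j) : (P.part i).min = m :=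
  le_antisymm (Finset.min_le ((mem_part_iff_part_eq P).2 hm))
    (Finset.le_min fun j hj => WithTop.coe_le_coe.2 (hle j ((mem_part_iff_part_eq P).1 hj)))

/-- Blocks correspond to their minima. -/
theorem card_filter_parts_min (P : SP n) (p : WithTop (Fin n) → Prop) [DecidablePred p] :
    #{B ∈ P.parts | p B.min} = #{j | (P.part j).min = j ∧ p j} := by
  symm
  refine card_bij (fun j _ => P.part j) (fun j hj => ?_) (fun j hj k hk hjk => ?_) fun B hB => ?_
  · rw [mem_filter] at hj ⊢
    exact ⟨P.part_mem.2 (mem_univ j), hj.2.1 ▸ hj.2.2⟩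
  · rw [mem_filter] at hj hk
    exact WithTop.coe_injective (hj.2.1.symm.trans (hjk ▸ hk.2.1))
  · rw [mem_filter] at hB
    obtain ⟨j, hj⟩ := min_of_nonempty (P.nonempty_of_mem_parts hB.1)
    have hjB : P.part j = B := P.part_eq_of_mem hB.1 (mem_of_min hj)
    exact ⟨j, mem_filter.2 ⟨mem_univ j, hjB ▸ hj, hj ▸ hB.2⟩, hjB⟩

theorem card_parts_eq_card_minima (P : SP n) : #P.parts = #{j | (P.part j).min = j} := by
  simpa using card_filter_parts_min P (fun _ => True)

theorem rgf_eq_of_forall_le_min (P : SP n) {i m : Fin n} (hm : (P.part i).min = m)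
    (hmin : ∀ j ≤ m, (P.part j).min = j) : rgf P i = m + 1 := by
  rw [rgf, blockOf_eq_part, hm, card_filter_parts_min P (· ≤ (m : WithTop (Fin n))),
    ← Fin.card_Iic]
  congr 1
  ext j
  simp only [mem_filter, mem_univ, true_and, mem_Iic, WithTop.coe_le_coe]
  exact ⟨And.right, fun hj => ⟨hmin j hj, hj⟩⟩

end Blocks

section Avoidance

variable {n : ℕ} {P : SP n}

theorem part_eq_of_avoids12_3 (h : avoids12_3 P) {a b c : Fin n} (hab : a < b) (hbc : b < c)
    (hR : P.part a = P.part b) : P.part a = P.part c := by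
  by_contra hac
  exact h ⟨a, b, c, hab, hbc, (inSameBlock_iff_part_eq P).2 hR,
    fun h' => hac ((inSameBlock_iff_part_eq P).1 h')⟩

theorem part_eq_of_avoids1_23 (h : avoids1_23 P) {a b c : Fin n} (hab : a < b) (hbc : b < c)
    (hR : P.part b = P.part c) : P.part a = P.part b := by
  by_contra hab'
  exact h ⟨a, b, c, hab, hbc, (inSameBlock_iff_part_eq P).2 hR,
    fun h' => hab' ((inSameBlock_iff_part_eq P).1 h')⟩

theorem part_eq_of_le_or_le (h1 : avoids1_23 P) (h2 : avoids12_3 P) {a b x : Fin n}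
    (hab : a < b) (hR : P.part a = P.part b) (hx : x ≤ a ∨ b ≤ x) : P.part x = P.part a := by
  rcases hx with hx | hx
  · rcases hx.lt_or_eq with hx | rfl
    exacts [part_eq_of_avoids1_23 h1 hx hab hR, rfl]
  · rcases hx.lt_or_eq with hx | rfl
    exacts [(part_eq_of_avoids12_3 h2 hab hx hR).symm, hR.symm]

theorem part_eq_of_not_ends (h1 : avoids1_23 P) (h2 : avoids12_3 P) {a b : Fin n} (hab : a < b)
    (hR : P.part a = P.part b) (hends : 0 < (a : ℕ) ∨ (b : ℕ) < n - 1) (x : Fin n) :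
    P.part x = P.part a := by
  rcases hends with ha | hb
  · have hza : (⟨0, by omega⟩ : Fin n) < a := Fin.lt_def.2 ha
    have hz := part_eq_of_le_or_le h1 h2 hab hR (Or.inl hza.le)
    rcases le_total x a with hx | hx
    · exact part_eq_of_le_or_le h1 h2 hab hR (Or.inl hx)
    · exact (part_eq_of_le_or_le h1 h2 hza hz (Or.inr hx)).trans hz
  · have hbl : b < (⟨n - 1, by omega⟩ : Fin n) := Fin.lt_def.2 hb
    have hl := part_eq_of_le_or_le h1 h2 hab hR (Or.inr hbl.le)
    rcases le_total x b with hx | hx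
    · exact (part_eq_of_le_or_le h1 h2 hbl (hR.symm.trans hl.symm) (Or.inl hx)).trans hR.symm
    · exact part_eq_of_le_or_le h1 h2 hab hR (Or.inr hx)

end Avoidance

section Residues

theorem Nat.eq_zero_and_eq_of_mod_eq {x y d : ℕ} (hxy : x < y) (hyd : y ≤ d)
    (h : x % d = y % d) : x = 0 ∧ y = d := by
  rcases hyd.lt_or_eq with hyd | rfl
  · rw [Nat.mod_eq_of_lt (hxy.trans hyd), Nat.mod_eq_of_lt hyd] at h
    omega
  · rw [Nat.mod_self, Nat.mod_eq_of_lt hxy] at h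
    exact ⟨h, rfl⟩

instance {α β : Type*} [DecidableEq β] (f : α → β) : DecidableRel (Setoid.ker f).r :=
  fun a b => decEq (f a) (f b)

def residuePartition (n d : ℕ) : SP n :=
  Finpartition.ofSetoid (Setoid.ker fun i : Fin n => (i : ℕ) % d)

variable {n d : ℕ}

theorem part_residuePartition_eq_iff {i j : Fin n} :
    (residuePartition n d).part i = (residuePartition n d).part j ↔ (i : ℕ) % d = j % d := by
  rw [← mem_part_iff_part_eq, residuePartition, mem_part_ofSetoid_iff_rel, eq_comm]
  rfl

theorem eq_residuePartition {P : SP n}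
    (h : ∀ x y : Fin n, x < y → (P.part x = P.part y ↔ (x : ℕ) % d = y % d)) :
    P = residuePartition n d := by
  refine eq_of_part_eq_iff fun x y => ?_
  rw [part_residuePartition_eq_iff]
  rcases lt_trichotomy x y with hxy | rfl | hxy
  · exact h x y hxy
  · simp
  · rw [eq_comm, h y x hxy, eq_comm]

theorem min_part_residuePartition (i : Fin n) :
    ((residuePartition n d).part i).min = (⟨i % d, (Nat.mod_le _ _).trans_lt i.isLt⟩ : Fin n) :=
  min_part_eq (part_residuePartition_eq_iff.2 (Nat.mod_mod _ _))
    fun _ hj => Fin.le_def.2 ((Nat.mod_le _ _).trans_eq' (part_residuePartition_eq_iff.1 hj))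

theorem min_part_residuePartition_of_lt {j : Fin n} (hj : (j : ℕ) < d) :
    ((residuePartition n d).part j).min = j := by
  rw [min_part_residuePartition]
  congr
  exact Nat.mod_eq_of_lt hj

theorem rgf_residuePartition (hd : 0 < d) (i : Fin n) :
    rgf (residuePartition n d) i = i % d + 1 :=
  rgf_eq_of_forall_le_min _ (min_part_residuePartition i) fun _ hj =>
    min_part_residuePartition_of_lt ((Fin.le_def.1 hj).trans_lt (Nat.mod_lt _ hd))

theorem card_residuePartition (hd : 0 < d) (hdn : d ≤ n) : #(residuePartition n d).parts = d := by
  rw [card_parts_eq_card_minima]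
  simp only [min_part_residuePartition, WithTop.coe_eq_coe, Fin.ext_iff, Nat.mod_eq_iff_lt hd.ne',
    Fin.card_filter_val_lt]
  omega

theorem avoids_residuePartition (hd : d = 1 ∨ n ≤ d + 1) :
    avoids1_23 (residuePartition n d) ∧ avoids12_3 (residuePartition n d) := by
  simp only [avoids1_23, avoids12_3, inSameBlock_iff_part_eq, part_residuePartition_eq_iff]
  rcases hd with rfl | hd
  · simp [Nat.mod_one]
  constructor
  · rintro ⟨a, b, c, hab, hbc, hR, -⟩
    have := Nat.eq_zero_and_eq_of_mod_eq hbc (by omega) hR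
    omega
  · rintro ⟨a, b, c, hab, hbc, hR, -⟩
    have := Nat.eq_zero_and_eq_of_mod_eq hab (by omega) hR
    omega

end Residues

theorem eq_residuePartition_of_avoids {n : ℕ} {P : SP n} (h1 : avoids1_23 P) (h2 : avoids12_3 P) :
    P = residuePartition n 1 ∨ P = residuePartition n (n - 1) ∨ P = residuePartition n n := by
  by_cases hbig :
      ∃ a b : Fin n, a < b ∧ P.part a = P.part b ∧ (0 < (a : ℕ) ∨ (b : ℕ) < n - 1)
  · obtain ⟨a, b, hab, hR, hends⟩ := hbig
    have hall := part_eq_of_not_ends h1 h2 hab hR hends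
    exact Or.inl (eq_residuePartition fun x y _ => by simp [hall, Nat.mod_one])
  push Not at hbig
  have hpair :
      ∀ x y : Fin n, x < y → P.part x = P.part y → (x : ℕ) = 0 ∧ (y : ℕ) = n - 1 :=
    fun x y hxy hR => by have := hbig x y hxy hR; omega
  right
  by_cases hends : ∃ a b : Fin n, (a : ℕ) = 0 ∧ (b : ℕ) = n - 1 ∧ P.part a = P.part b
  · obtain ⟨a, b, ha, hb, hR⟩ := hends
    refine Or.inl (eq_residuePartition fun x y hxy => ⟨fun hxy' => ?_, fun hmod => ?_⟩)
    · obtain ⟨hx, hy⟩ := hpair x y hxy hxy'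
      rw [hx, hy, Nat.zero_mod, Nat.mod_self]
    · obtain ⟨hx, hy⟩ := Nat.eq_zero_and_eq_of_mod_eq hxy (by omega) hmod
      rwa [show x = a by omega, show y = b by omega]
  · push Not at hends
    refine Or.inr (eq_residuePartition fun x y hxy => ⟨fun hxy' => ?_, fun hmod => ?_⟩)
    · obtain ⟨hx, hy⟩ := hpair x y hxy hxy'
      exact absurd hxy' (hends x y hx hy)
    · rw [Nat.mod_eq_of_lt x.isLt, Nat.mod_eq_of_lt y.isLt] at hmod
      omega

/-- For `n ≥ 3`, the set partitions of `[n]` avoiding both `1/23` and `12/3`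
have `k ∈ {1, n-1, n}` blocks, with RGFs `1^n`, `1 2 ⋯ (n-1) 1` and `1 2 ⋯ n`
respectively; and there is exactly one such partition for each of these `k`. -/
theorem stmt9 (n : ℕ) (hn : 3 ≤ n) :
    (∀ P : SP n, avoids1_23 P → avoids12_3 P →
      (P.parts.card = 1 ∧ ∀ i : Fin n, rgf P i = 1) ∨
      (P.parts.card = n - 1 ∧
        ∀ i : Fin n, rgf P i = if (i : ℕ) < n - 1 then (i : ℕ) + 1 else 1) ∨
      (P.parts.card = n ∧ ∀ i : Fin n, rgf P i = (i : ℕ) + 1)) ∧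
    (∀ k ∈ ({1, n - 1, n} : Set ℕ),
      Nat.card {P : SP n // P.parts.card = k ∧ avoids1_23 P ∧ avoids12_3 P} = 1) := by
  refine ⟨fun P h1 h2 => ?_, fun k hk => ?_⟩
  · rcases eq_residuePartition_of_avoids h1 h2 with rfl | rfl | rfl
    · refine Or.inl ⟨card_residuePartition one_pos (by omega), fun i => ?_⟩
      rw [rgf_residuePartition one_pos, Nat.mod_one]
    · refine Or.inr (Or.inl ⟨card_residuePartition (by omega) (by omega), fun i => ?_⟩)
      rw [rgf_residuePartition (by omega)]
      split_ifs with hi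
      · rw [Nat.mod_eq_of_lt hi]
      · rw [show (i : ℕ) = n - 1 by omega, Nat.mod_self]
    · refine Or.inr (Or.inr ⟨card_residuePartition (by omega) le_rfl, fun i => ?_⟩)
      rw [rgf_residuePartition (by omega), Nat.mod_eq_of_lt i.isLt]
  · simp only [Set.mem_insert_iff, Set.mem_singleton_iff] at hk
    rw [Nat.card_eq_one_iff_exists]
    refine ⟨⟨residuePartition n k, card_residuePartition (by omega) (by omega),
      avoids_residuePartition (by omega)⟩, ?_⟩
    rintro ⟨P, hPk, h1, h2⟩
    ext1
    rcases eq_residuePartition_of_avoids h1 h2 with rfl | rfl | rfl <;>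
      rw [card_residuePartition (by omega) (by omega)] at hPk <;> subst hPk <;> rfl
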